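/- arXiv:gr-qc/0503007 — 3 statements merged into one kernel-verified Lean document; each statement's English description precedes it below -/
import Mathlib

section
/- Suppose ζ₀ is positive and smooth on an interval where ζ₀(r) + rζ₀'(r) ≠ 0, and define Δ₀(r) = (ζ₀/(ζ₀ + rζ₀'))² · r² · exp(2∫ (ζ₀'/ζ₀)·((ζ₀ - rζ₀')/(ζ₀ + rζ₀')) dr). Then Δ₀ satisfies the homogeneous ODE [r(rζ₀)']Δ₀' + [2r²ζ₀'' - 2(rζ₀)']Δ₀ = 0. -/
/-!
Differentiating the closed form gives r (rζ₀)' Δ₀' = 2 (ζ₀ + rζ₀' - r²ζ₀'') Δ₀: the terms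
± 2r²ζ₀'²/ζ₀ coming from the quotient ζ₀/(ζ₀ + rζ₀') and from the exponential cancel, and what is
left is the ODE since (rζ₀)' = ζ₀ + rζ₀'.
-/

open Real

lemma hasDerivAt_deriv_of_contDiffAt_two {f : ℝ → ℝ} {x : ℝ} (hf : ContDiffAt ℝ 2 f x) :
    HasDerivAt (deriv f) (deriv (deriv f) x) x :=
  ((hf.derivWithin (m := 1) le_rfl).differentiableAt one_ne_zero).hasDerivAt

lemma hasDerivAt_sq_div_mul_sq_mul_exp {ζ η F : ℝ → ℝ} {ζ' η' F' r : ℝ}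
    (hζ : HasDerivAt ζ ζ' r) (hη : HasDerivAt η η' r) (hF : HasDerivAt F F' r)
    (hg : ζ r + r * η r ≠ 0) :
    HasDerivAt (fun s => (ζ s / (ζ s + s * η s)) ^ 2 * s ^ 2 * exp (2 * F s))
      (2 * r * ζ r * exp (2 * F r) / (ζ r + r * η r) ^ 3 *
        (r * (ζ' * (ζ r + r * η r) - ζ r * (ζ' + η r + r * η'))
          + ζ r * (ζ r + r * η r) + r * ζ r * (ζ r + r * η r) * F')) r := by
  have hquot := hζ.fun_div (hζ.fun_add ((hasDerivAt_id' r).fun_mul hη)) hg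
  refine (((hquot.fun_pow 2).fun_mul (hasDerivAt_pow 2 r)).fun_mul
    (hF.const_mul 2).exp).congr_deriv ?_
  simp only [Nat.add_one_sub_one, pow_one, Nat.cast_ofNat]
  field_simp
  ring

theorem pf_Delta0_solves_homogeneous_general
    (S : Set ℝ)
    (ζ₀ F : ℝ → ℝ)
    (hζ₀ : ∀ r ∈ S, ContDiffAt ℝ 2 ζ₀ r)
    (hζpos : ∀ r ∈ S, 0 < ζ₀ r)
    (hne : ∀ r ∈ S, ζ₀ r + r * deriv ζ₀ r ≠ 0)
    (hF : ∀ r ∈ S, HasDerivAt F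
      ((deriv ζ₀ r / ζ₀ r) * ((ζ₀ r - r * deriv ζ₀ r) / (ζ₀ r + r * deriv ζ₀ r))) r) :
    ∀ r ∈ S,
      r * deriv (fun s => s * ζ₀ s) r
          * deriv (fun s =>
              (ζ₀ s / (ζ₀ s + s * deriv ζ₀ s)) ^ 2 * s ^ 2 * Real.exp (2 * F s)) r
        + (2 * r ^ 2 * deriv (deriv ζ₀) r - 2 * deriv (fun s => s * ζ₀ s) r)
            * ((ζ₀ r / (ζ₀ r + r * deriv ζ₀ r)) ^ 2 * r ^ 2 * Real.exp (2 * F r)) = 0 := by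
  intro r hr
  have hζ : HasDerivAt ζ₀ (deriv ζ₀ r) r :=
    ((hζ₀ r hr).differentiableAt two_ne_zero).hasDerivAt
  have hΔ := hasDerivAt_sq_div_mul_sq_mul_exp hζ
    (hasDerivAt_deriv_of_contDiffAt_two (hζ₀ r hr)) (hF r hr) (hne r hr)
  have hrζ : HasDerivAt (fun s => s * ζ₀ s) (1 * ζ₀ r + r * deriv ζ₀ r) r :=
    (hasDerivAt_id r).mul hζ
  rw [hrζ.deriv, hΔ.deriv]
  have hζne : ζ₀ r ≠ 0 := (hζpos r hr).ne'
  have hg := hne r hr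
  field_simp
  ring

/-- The explicit function Δ₀(r) = (ζ₀/(ζ₀+rζ₀'))²·r²·exp(2∫(ζ₀'/ζ₀)·((ζ₀-rζ₀')/(ζ₀+rζ₀'))dr)
satisfies the homogeneous ODE [r(rζ₀)']Δ₀' + [2r²ζ₀'' - 2(rζ₀)']Δ₀ = 0. -/
theorem pf_Delta0_solves_homogeneous
    (S : Set ℝ) (hSopen : IsOpen S) (hS : ∀ r ∈ S, 0 < r)
    (ζ₀ F : ℝ → ℝ)
    (hζ₀ : ∀ r ∈ S, ContDiffAt ℝ 2 ζ₀ r)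
    (hζpos : ∀ r ∈ S, 0 < ζ₀ r)
    (hne : ∀ r ∈ S, ζ₀ r + r * deriv ζ₀ r ≠ 0)
    (hF : ∀ r ∈ S, HasDerivAt F
      ((deriv ζ₀ r / ζ₀ r) * ((ζ₀ r - r * deriv ζ₀ r) / (ζ₀ r + r * deriv ζ₀ r))) r) :
    ∀ r ∈ S,
      r * deriv (fun s => s * ζ₀ s) r
          * deriv (fun s =>
              (ζ₀ s / (ζ₀ s + s * deriv ζ₀ s)) ^ 2 * s ^ 2 * Real.exp (2 * F s)) r
        + (2 * r ^ 2 * deriv (deriv ζ₀) r - 2 * deriv (fun s => s * ζ₀ s) r)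
            * ((ζ₀ r / (ζ₀ r + r * deriv ζ₀ r)) ^ 2 * r ^ 2 * Real.exp (2 * F r)) = 0 :=
  pf_Delta0_solves_homogeneous_general S ζ₀ F hζ₀ hζpos hne hF
end

section
/- If (ζ₀, B₀) satisfies the perfect fluid equation with B₀ > 0 and ζ₀ > 0, and Z₀(r) = σ + ε·∫ r/(ζ₀(r)²·√(B₀(r))) dr for constants σ, ε, then the pair (ζ₀·Z₀, B₀) also satisfies the perfect fluid equation. -/
/-!
Reduction of order. Writing the perfect fluid operator as `a ζ'' + b ζ' + c ζ` with
`a = 2r²B`, `b = r²B' - 2rB`, the product rule gives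
`L[ζ₀ Z] = Z L[ζ₀] + a ζ₀ Z'' + (2a ζ₀' + b ζ₀) Z'`. The first term vanishes since `ζ₀` is a
solution, and the rest vanishes iff `(ζ₀² exp (∫ b / a) Z')' = 0`. As `exp ∫ b / a = √B / r`,
this holds for `Z' = ε r / (ζ₀² √B)`.
-/

open Filter Topology

theorem deriv_deriv_mul {𝕜 : Type*} [NontriviallyNormedField 𝕜] {f g : 𝕜 → 𝕜} {x : 𝕜}
    (hf : ∀ᶠ y in 𝓝 x, DifferentiableAt 𝕜 f y) (hf' : DifferentiableAt 𝕜 (deriv f) x)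
    (hg : ∀ᶠ y in 𝓝 x, DifferentiableAt 𝕜 g y) (hg' : DifferentiableAt 𝕜 (deriv g) x) :
    deriv (deriv fun y => f y * g y) x =
      deriv (deriv f) x * g x + 2 * deriv f x * deriv g x + f x * deriv (deriv g) x := by
  have hderiv : deriv (fun y => f y * g y) =ᶠ[𝓝 x] fun y => deriv f y * g y + f y * deriv g y := by
    filter_upwards [hf, hg] with y hfy hgy using deriv_mul hfy hgy
  rw [hderiv.deriv_eq]
  exact ((hf'.hasDerivAt.mul hg.self_of_nhds.hasDerivAt).add
    (hf.self_of_nhds.hasDerivAt.mul hg'.hasDerivAt)).deriv.trans (by ring)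

noncomputable def perfectFluidOp (ζ B : ℝ → ℝ) (r : ℝ) : ℝ :=
  2 * r ^ 2 * B r * deriv (deriv ζ) r + (r ^ 2 * deriv B r - 2 * r * B r) * deriv ζ r
    + (r * deriv B r - 2 * B r + 2) * ζ r

theorem perfectFluidOp_mul {u Z B : ℝ → ℝ} {r : ℝ}
    (hu : ∀ᶠ s in 𝓝 r, DifferentiableAt ℝ u s) (hu' : DifferentiableAt ℝ (deriv u) r)
    (hZ : ∀ᶠ s in 𝓝 r, DifferentiableAt ℝ Z s) (hZ' : DifferentiableAt ℝ (deriv Z) r) :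
    perfectFluidOp (fun s => u s * Z s) B r =
      Z r * perfectFluidOp u B r + 2 * r ^ 2 * B r * u r * deriv (deriv Z) r
        + (4 * r ^ 2 * B r * deriv u r + (r ^ 2 * deriv B r - 2 * r * B r) * u r) * deriv Z r := by
  unfold perfectFluidOp
  rw [deriv_deriv_mul hu hu' hZ hZ', deriv_fun_mul hu.self_of_nhds hZ.self_of_nhds]
  ring

theorem hasDerivAt_div_sq_mul_sqrt {u B : ℝ → ℝ} {u' B' r : ℝ} (hu : HasDerivAt u u' r)
    (hB : HasDerivAt B B' r) (hu0 : u r ≠ 0) (hB0 : 0 < B r) :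
    HasDerivAt (fun s => s / (u s ^ 2 * √(B s)))
      ((1 - r * (2 * u' / u r + B' / (2 * B r))) / (u r ^ 2 * √(B r))) r := by
  have hsqrt : √(B r) ≠ 0 := (Real.sqrt_pos.mpr hB0).ne'
  refine ((hasDerivAt_id' r).fun_div ((hu.fun_pow 2).fun_mul (hB.sqrt hB0.ne'))
    (mul_ne_zero (pow_ne_zero 2 hu0) hsqrt)).congr_deriv ?_
  field_simp
  rw [Real.sq_sqrt hB0.le]
  ring

/-- The first-order equation left over after reduction of order, for `Z' = r / (u² √B)`. -/
theorem reductionOfOrder_eq_zero (r u u' B B' : ℝ) (hu : u ≠ 0) (hB : 0 < B) :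
    2 * r ^ 2 * B * u * ((1 - r * (2 * u' / u + B' / (2 * B))) / (u ^ 2 * √B))
      + (4 * r ^ 2 * B * u' + (r ^ 2 * B' - 2 * r * B) * u) * (r / (u ^ 2 * √B)) = 0 := by
  field_simp
  ring

theorem pf_theorem2_general
    (S : Set ℝ) (hSopen : IsOpen S)
    (ζ₀ B₀ F : ℝ → ℝ) (σ ε : ℝ)
    (hζ₀ : ∀ r ∈ S, ContDiffAt ℝ 2 ζ₀ r)
    (hB₀ : ∀ r ∈ S, DifferentiableAt ℝ B₀ r)
    (hζpos : ∀ r ∈ S, 0 < ζ₀ r)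
    (hBpos : ∀ r ∈ S, 0 < B₀ r)
    (hF : ∀ r ∈ S, HasDerivAt F (r / (ζ₀ r ^ 2 * Real.sqrt (B₀ r))) r)
    (hpf : ∀ r ∈ S,
      2 * r ^ 2 * B₀ r * deriv (deriv ζ₀) r
        + (r ^ 2 * deriv B₀ r - 2 * r * B₀ r) * deriv ζ₀ r
        + (r * deriv B₀ r - 2 * B₀ r + 2) * ζ₀ r = 0) :
    ∀ r ∈ S,
      2 * r ^ 2 * B₀ r * deriv (deriv (fun s => ζ₀ s * (σ + ε * F s))) r
        + (r ^ 2 * deriv B₀ r - 2 * r * B₀ r) * deriv (fun s => ζ₀ s * (σ + ε * F s)) r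
        + (r * deriv B₀ r - 2 * B₀ r + 2) * (ζ₀ r * (σ + ε * F r)) = 0 := by
  intro r hr
  have hS : S ∈ 𝓝 r := hSopen.mem_nhds hr
  have hZ : ∀ s ∈ S, HasDerivAt (fun t => σ + ε * F t) (ε * (s / (ζ₀ s ^ 2 * √(B₀ s)))) s :=
    fun s hs => ((hF s hs).const_mul ε).const_add σ
  have hZ' : HasDerivAt (deriv fun t => σ + ε * F t) (ε * ((1 - r * (2 * deriv ζ₀ r / ζ₀ r
      + deriv B₀ r / (2 * B₀ r))) / (ζ₀ r ^ 2 * √(B₀ r)))) r := by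
    refine ((hasDerivAt_div_sq_mul_sqrt ((hζ₀ r hr).differentiableAt two_ne_zero).hasDerivAt
      (hB₀ r hr).hasDerivAt (hζpos r hr).ne' (hBpos r hr)).const_mul ε).congr_of_eventuallyEq ?_
    filter_upwards [hS] with s hs using (hZ s hs).deriv
  have hζ₀ev : ∀ᶠ s in 𝓝 r, DifferentiableAt ℝ ζ₀ s := by
    filter_upwards [(hζ₀ r hr).eventually (by simp)] with s hs
    exact hs.differentiableAt two_ne_zero
  have hζ₀' : DifferentiableAt ℝ (deriv ζ₀) r :=
    ((hζ₀ r hr).derivWithin (m := 1) le_rfl).differentiableAt one_ne_zero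
  have hZev : ∀ᶠ s in 𝓝 r, DifferentiableAt ℝ (fun t => σ + ε * F t) s := by
    filter_upwards [hS] with s hs using (hZ s hs).differentiableAt
  have hζ₀sol : perfectFluidOp ζ₀ B₀ r = 0 := hpf r hr
  show perfectFluidOp (fun s => ζ₀ s * (σ + ε * F s)) B₀ r = 0
  rw [perfectFluidOp_mul hζ₀ev hζ₀' hZev hZ'.differentiableAt, hζ₀sol, hZ'.deriv,
    (hZ r hr).deriv]
  linear_combination ε * reductionOfOrder_eq_zero r (ζ₀ r) (deriv ζ₀ r) (B₀ r) (deriv B₀ r)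
    (hζpos r hr).ne' (hBpos r hr)

/-- Theorem 2: if (ζ₀, B₀) is a perfect fluid sphere with ζ₀ > 0, B₀ > 0, and
Z₀ = σ + ε·∫ r/(ζ₀²√B₀) dr, then (ζ₀·Z₀, B₀) is also a perfect fluid sphere. -/
theorem pf_theorem2
    (S : Set ℝ) (hSopen : IsOpen S) (hS : ∀ r ∈ S, 0 < r)
    (ζ₀ B₀ F : ℝ → ℝ) (σ ε : ℝ)
    (hζ₀ : ∀ r ∈ S, ContDiffAt ℝ 2 ζ₀ r)
    (hB₀ : ∀ r ∈ S, DifferentiableAt ℝ B₀ r)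
    (hζpos : ∀ r ∈ S, 0 < ζ₀ r)
    (hBpos : ∀ r ∈ S, 0 < B₀ r)
    (hF : ∀ r ∈ S, HasDerivAt F (r / (ζ₀ r ^ 2 * Real.sqrt (B₀ r))) r)
    (hpf : ∀ r ∈ S,
      2 * r ^ 2 * B₀ r * deriv (deriv ζ₀) r
        + (r ^ 2 * deriv B₀ r - 2 * r * B₀ r) * deriv ζ₀ r
        + (r * deriv B₀ r - 2 * B₀ r + 2) * ζ₀ r = 0) :
    ∀ r ∈ S,
      2 * r ^ 2 * B₀ r * deriv (deriv (fun s => ζ₀ s * (σ + ε * F s))) r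
        + (r ^ 2 * deriv B₀ r - 2 * r * B₀ r) * deriv (fun s => ζ₀ s * (σ + ε * F s)) r
        + (r * deriv B₀ r - 2 * B₀ r + 2) * (ζ₀ r * (σ + ε * F r)) = 0 :=
  pf_theorem2_general S hSopen ζ₀ B₀ F σ ε hζ₀ hB₀ hζpos hBpos hF hpf
end

section
/- If ζ₀ > 0 and B₀ > 0 satisfy the perfect fluid equation, then a function of the form ζ₁ = ζ₀·Z₀ satisfies the same equation (with the same B₀) if and only if Z₀ satisfies (r²ζ₀B₀' + 4r²ζ₀'B₀ - 2rζ₀B₀)Z₀' + 2r²ζ₀B₀·Z₀'' = 0. -/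
open Filter Topology

theorem deriv_deriv_mul_of_contDiffAt {𝕜 : Type*} [NontriviallyNormedField 𝕜] {f g : 𝕜 → 𝕜}
    {x : 𝕜} (hf : ContDiffAt 𝕜 2 f x) (hg : ContDiffAt 𝕜 2 g x) :
    deriv (deriv fun y => f y * g y) x
      = deriv (deriv f) x * g x + 2 * (deriv f x * deriv g x) + f x * deriv (deriv g) x := by
  have hderiv : deriv (fun y => f y * g y) =ᶠ[𝓝 x] fun y => deriv f y * g y + f y * deriv g y := by
    filter_upwards [hf.eventually (by simp), hg.eventually (by simp)] with y hfy hgy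
    exact deriv_mul (hfy.differentiableAt two_ne_zero) (hgy.differentiableAt two_ne_zero)
  have hf₁ := hf.differentiableAt two_ne_zero
  have hg₁ := hg.differentiableAt two_ne_zero
  have hf₂ := (hf.derivWithin (m := 1) le_rfl).differentiableAt one_ne_zero
  have hg₂ := (hg.derivWithin (m := 1) le_rfl).differentiableAt one_ne_zero
  rw [hderiv.deriv_eq, deriv_fun_add (hf₂.fun_mul hg₁) (hf₁.fun_mul hg₂),
    deriv_fun_mul hf₂ hg₁, deriv_fun_mul hf₁ hg₂]
  ring

theorem pf_reduction_of_order_general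
    (S : Set ℝ)
    (ζ₀ B₀ Z₀ : ℝ → ℝ)
    (hζ₀ : ∀ r ∈ S, ContDiffAt ℝ 2 ζ₀ r)
    (hZ₀ : ∀ r ∈ S, ContDiffAt ℝ 2 Z₀ r)
    (hpf : ∀ r ∈ S,
      2 * r ^ 2 * B₀ r * deriv (deriv ζ₀) r
        + (r ^ 2 * deriv B₀ r - 2 * r * B₀ r) * deriv ζ₀ r
        + (r * deriv B₀ r - 2 * B₀ r + 2) * ζ₀ r = 0) :
    (∀ r ∈ S,
      2 * r ^ 2 * B₀ r * deriv (deriv (fun s => ζ₀ s * Z₀ s)) r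
        + (r ^ 2 * deriv B₀ r - 2 * r * B₀ r) * deriv (fun s => ζ₀ s * Z₀ s) r
        + (r * deriv B₀ r - 2 * B₀ r + 2) * (ζ₀ r * Z₀ r) = 0)
    ↔ (∀ r ∈ S,
      (r ^ 2 * ζ₀ r * deriv B₀ r + 4 * r ^ 2 * deriv ζ₀ r * B₀ r - 2 * r * ζ₀ r * B₀ r)
          * deriv Z₀ r
        + 2 * r ^ 2 * ζ₀ r * B₀ r * deriv (deriv Z₀) r = 0) := by
  refine forall₂_congr fun r hr => ?_
  -- The product rule splits the equation for ζ₀ Z₀ into Z₀ times the equation for ζ₀,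
  -- which vanishes, plus the reduced equation for Z₀.
  rw [deriv_deriv_mul_of_contDiffAt (hζ₀ r hr) (hZ₀ r hr),
    deriv_fun_mul ((hζ₀ r hr).differentiableAt two_ne_zero)
      ((hZ₀ r hr).differentiableAt two_ne_zero)]
  constructor <;> intro h
  · linear_combination h - Z₀ r * hpf r hr
  · linear_combination h + Z₀ r * hpf r hr

/-- Reduction of order: given a perfect fluid sphere (ζ₀, B₀) with ζ₀, B₀ > 0,
ζ₁ = ζ₀·Z₀ satisfies the perfect fluid equation iff Z₀ satisfies
(r²ζ₀B₀' + 4r²ζ₀'B₀ - 2rζ₀B₀)Z₀' + 2r²ζ₀B₀·Z₀'' = 0. -/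
theorem pf_reduction_of_order
    (S : Set ℝ) (hSopen : IsOpen S) (hS : ∀ r ∈ S, 0 < r)
    (ζ₀ B₀ Z₀ : ℝ → ℝ)
    (hζ₀ : ∀ r ∈ S, ContDiffAt ℝ 2 ζ₀ r)
    (hZ₀ : ∀ r ∈ S, ContDiffAt ℝ 2 Z₀ r)
    (hB₀ : ∀ r ∈ S, DifferentiableAt ℝ B₀ r)
    (hζpos : ∀ r ∈ S, 0 < ζ₀ r)
    (hBpos : ∀ r ∈ S, 0 < B₀ r)
    (hpf : ∀ r ∈ S,
      2 * r ^ 2 * B₀ r * deriv (deriv ζ₀) r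
        + (r ^ 2 * deriv B₀ r - 2 * r * B₀ r) * deriv ζ₀ r
        + (r * deriv B₀ r - 2 * B₀ r + 2) * ζ₀ r = 0) :
    (∀ r ∈ S,
      2 * r ^ 2 * B₀ r * deriv (deriv (fun s => ζ₀ s * Z₀ s)) r
        + (r ^ 2 * deriv B₀ r - 2 * r * B₀ r) * deriv (fun s => ζ₀ s * Z₀ s) r
        + (r * deriv B₀ r - 2 * B₀ r + 2) * (ζ₀ r * Z₀ r) = 0)
    ↔ (∀ r ∈ S,
      (r ^ 2 * ζ₀ r * deriv B₀ r + 4 * r ^ 2 * deriv ζ₀ r * B₀ r - 2 * r * ζ₀ r * B₀ r)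
          * deriv Z₀ r
        + 2 * r ^ 2 * ζ₀ r * B₀ r * deriv (deriv Z₀) r = 0) :=
  pf_reduction_of_order_general S ζ₀ B₀ Z₀ hζ₀ hZ₀ hpf
end
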